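/- arXiv:1011.1869 — 9 statements merged into one kernel-verified Lean document; each statement's English description precedes it below -/
import Mathlib

section
/- Every compact Hausdorff P-space is finite. -/
/-!
In a T₁ P-space every countable set is closed, being a countable union of points. A compact
space that is infinite contains a countably infinite set `S`, which must have an accumulation
point `x`; but then `x` lies in the closure of the countable set `S \ {x}`, which is closed.
-/

open Set Filter Topology

def IsPSpace (X : Type*) [TopologicalSpace X] : Prop :=
  ∀ f : ℕ → Set X, (∀ n, IsOpen (f n)) → IsOpen (⋂ n, f n)

namespace IsPSpace

variable {X : Type*} [TopologicalSpace X]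

theorem isOpen_iInter {ι : Sort*} [Countable ι] (hX : IsPSpace X) {f : ι → Set X}
    (hf : ∀ i, IsOpen (f i)) : IsOpen (⋂ i, f i) := by
  cases isEmpty_or_nonempty ι with
  | inl _ => simp
  | inr _ =>
    obtain ⟨g, hg⟩ := exists_surjective_nat ι
    rw [← hg.iInter_comp]
    exact hX _ fun n => hf (g n)

theorem isClosed_of_countable [T1Space X] (hX : IsPSpace X) {s : Set X} (hs : s.Countable) :
    IsClosed s := by
  have : Countable s := hs.to_subtype
  rw [← isOpen_compl_iff, ← biUnion_of_singleton s, compl_iUnion₂, biInter_eq_iInter]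
  exact hX.isOpen_iInter fun _ => isOpen_compl_singleton

theorem not_accPt_of_countable [T1Space X] (hX : IsPSpace X) {s : Set X} (hs : s.Countable)
    (x : X) : ¬AccPt x (𝓟 s) := by
  rw [accPt_principal_iff_clusterPt, ← mem_closure_iff_clusterPt,
    (hX.isClosed_of_countable (hs.mono sdiff_subset)).closure_eq]
  exact fun hx => hx.2 rfl

theorem finite [T1Space X] [CompactSpace X] (hX : IsPSpace X) : Finite X := by
  by_contra hinf
  have : Infinite X := not_finite_iff_infinite.mp hinf
  let e := Infinite.natEmbedding X
  obtain ⟨x, hx⟩ := (infinite_range_of_injective e.injective).exists_accPt_principal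
  exact hX.not_accPt_of_countable (countable_range e) x hx

end IsPSpace

/-- Every compact Hausdorff P-space is finite. -/
theorem stmt_2 {X : Type*} [TopologicalSpace X] [CompactSpace X] [T2Space X]
    (hP : ∀ f : ℕ → Set X, (∀ n, IsOpen (f n)) → IsOpen (⋂ n, f n)) :
    Finite X :=
  IsPSpace.finite hP
end

section
/- If a topological group G is a Lindelöf P-space, then G is Rothberger bounded: for every sequence (U_n : n < ω) of neighborhoods of the identity there is a sequence (x_n : n < ω) of elements of G such that G = ⋃_{n<ω} x_n * U_n. -/
open scoped Pointwise

open Set Topology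

theorem LindelofSpace.exists_seq_iUnion_eq_univ {X : Type*} [TopologicalSpace X] [LindelofSpace X]
    [Nonempty X] {U : X → Set X} (hU : ∀ x, U x ∈ 𝓝 x) : ∃ x : ℕ → X, ⋃ n, U (x n) = univ := by
  obtain ⟨t, htc, ht⟩ := countable_cover_nhds hU
  have htne : t.Nonempty := by
    obtain ⟨a, ha, -⟩ := mem_iUnion₂.1 (ht.symm ▸ mem_univ (Classical.arbitrary X))
    exact ⟨a, ha⟩
  obtain ⟨x, rfl⟩ := htc.exists_eq_range htne
  exact ⟨x, biUnion_range.symm.trans ht⟩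

theorem iInter_mem_nhds_of_forall_isOpen_iInter {X : Type*} [TopologicalSpace X]
    (hP : ∀ f : ℕ → Set X, (∀ n, IsOpen (f n)) → IsOpen (⋂ n, f n))
    {U : ℕ → Set X} {a : X} (hU : ∀ n, U n ∈ 𝓝 a) : ⋂ n, U n ∈ 𝓝 a := by
  choose W hWU hWo haW using fun n => mem_nhds_iff.1 (hU n)
  exact Filter.mem_of_superset ((hP W hWo).mem_nhds (mem_iInter.2 haW)) (iInter_mono hWU)

/-- A topological group that is a Lindelöf P-space is Rothberger bounded: for every
sequence of neighborhoods of the identity there are translates covering the group. -/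
theorem stmt_5 {G : Type*} [Group G] [TopologicalSpace G] [IsTopologicalGroup G]
    [LindelofSpace G]
    (hP : ∀ f : ℕ → Set G, (∀ n, IsOpen (f n)) → IsOpen (⋂ n, f n))
    (U : ℕ → Set G) (hU : ∀ n, U n ∈ nhds (1 : G)) :
    ∃ x : ℕ → G, (⋃ n, x n • U n) = Set.univ := by
  have hV : ⋂ n, U n ∈ 𝓝 (1 : G) := iInter_mem_nhds_of_forall_isOpen_iInter hP hU
  obtain ⟨x, hx⟩ := LindelofSpace.exists_seq_iUnion_eq_univ fun g : G => smul_mem_nhds_self.2 hV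
  refine ⟨x, univ_subset_iff.1 ?_⟩
  rw [← hx]
  exact iUnion_mono fun n => smul_set_mono (iInter_subset U n)
end

section
/- Let G be a Lindelöf topological group that is a P-space. Then for every open cover U of G there is an open neighborhood N of the identity such that for each x in G there is a member V of U with x*N ⊆ V. -/
/-!
Choose for each `x` a member `V x` of the cover and an open neighbourhood `W x` of `1` with
`x • (W x * W x) ⊆ V x`. By the Lindelöf property countably many translates `y • W y` cover `G`,
and in a P-space the intersection `N` of the corresponding countably many `W y` is still open.
If `x ∈ y • W y` then `x • N ⊆ y • (W y * W y) ⊆ V y`.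
-/

open scoped Pointwise
open Topology

theorem isOpen_biInter_of_countable {X ι : Type*} [TopologicalSpace X]
    (hP : ∀ f : ℕ → Set X, (∀ n, IsOpen (f n)) → IsOpen (⋂ n, f n))
    {s : Set ι} (hs : s.Countable) {f : ι → Set X} (hf : ∀ i ∈ s, IsOpen (f i)) :
    IsOpen (⋂ i ∈ s, f i) := by
  rcases s.eq_empty_or_nonempty with rfl | hne
  · simp
  obtain ⟨g, rfl⟩ := hs.exists_eq_range hne
  rw [Set.biInter_range]
  exact hP _ fun n => hf _ ⟨n, rfl⟩

section Group

variable {G : Type*} [Group G]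

theorem smul_subset_smul_mul_of_mem_smul {x y : G} {W N : Set G}
    (hx : x ∈ y • W) (hN : N ⊆ W) : x • N ⊆ y • (W * W) := by
  obtain ⟨w, hw, rfl⟩ := hx
  rintro _ ⟨n, hn, rfl⟩
  exact ⟨w * n, Set.mul_mem_mul hw (hN hn), by simp [mul_assoc]⟩

theorem exists_open_nhds_one_smul_mul_subset [TopologicalSpace G] [IsTopologicalGroup G]
    {x : G} {V : Set G} (hV : V ∈ 𝓝 x) :
    ∃ W : Set G, IsOpen W ∧ (1 : G) ∈ W ∧ x • (W * W) ⊆ V := by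
  have hV₁ : x⁻¹ • V ∈ 𝓝 (1 : G) := by
    simpa using (smul_mem_nhds_smul_iff x⁻¹).2 hV
  obtain ⟨W, hWo, hW1, hWW⟩ := exists_open_nhds_one_mul_subset hV₁
  exact ⟨W, hWo, hW1, Set.smul_set_subset_iff_subset_inv_smul_set.2 hWW⟩

end Group

/-- Lebesgue covering lemma for Lindelöf P-groups: for every open cover `U` of a
Lindelöf P-group `G` there is an open neighborhood `N` of the identity such that each
translate `x • N` is contained in some member of `U`. -/
theorem stmt_6 {G : Type*} [Group G] [TopologicalSpace G] [IsTopologicalGroup G]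
    [LindelofSpace G]
    (hP : ∀ f : ℕ → Set G, (∀ n, IsOpen (f n)) → IsOpen (⋂ n, f n))
    (U : Set (Set G)) (hUopen : ∀ V ∈ U, IsOpen V) (hUcov : ⋃₀ U = Set.univ) :
    ∃ N : Set G, IsOpen N ∧ (1 : G) ∈ N ∧
      ∀ x : G, ∃ V ∈ U, x • N ⊆ V := by
  have hlocal : ∀ x : G, ∃ V ∈ U, ∃ W : Set G, IsOpen W ∧ (1 : G) ∈ W ∧ x • (W * W) ⊆ V := by
    intro x
    obtain ⟨V, hVU, hxV⟩ := Set.mem_sUnion.1 (hUcov ▸ Set.mem_univ x)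
    exact ⟨V, hVU, exists_open_nhds_one_smul_mul_subset ((hUopen V hVU).mem_nhds hxV)⟩
  choose V hVU W hWo hW1 hWV using hlocal
  have hcover : Set.univ ⊆ ⋃ y, y • W y := fun y _ =>
    Set.mem_iUnion.2 ⟨y, Set.mem_smul_set.2 ⟨1, hW1 y, mul_one y⟩⟩
  obtain ⟨t, htc, htcov⟩ :=
    isLindelof_univ.elim_countable_subcover _ (fun y => (hWo y).smul y) hcover
  refine ⟨⋂ y ∈ t, W y, isOpen_biInter_of_countable hP htc fun y _ => hWo y,
    Set.mem_iInter₂.2 fun y _ => hW1 y, fun x => ?_⟩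
  obtain ⟨y, hyt, hxy⟩ := Set.mem_iUnion₂.1 (htcov (Set.mem_univ x))
  exact ⟨V y, hVU y,
    (smul_subset_smul_mul_of_mem_smul hxy (Set.biInter_subset_of_mem hyt)).trans (hWV y)⟩
end

section
/- Let I be an index set and for each i in I let X_i be a σ-compact topological group with identity e_i. Then the subgroup G = {f ∈ ∏_{i∈I} X_i : {j : f(j) ≠ e_j} is finite}, with the product topology, is σ-compact. -/
/-!
Write a finitely supported `f` as `maskOne m g`: keep `g` on the coordinates where the mask
`m : I → Bool` is `true` and put `1` elsewhere. Masks with at most `n` true entries form a closed,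
hence compact, subset of the Cantor cube `I → Bool`, so for each `n, k` the pairs `(m, g)` with
such a mask and `g i ∈ compactCovering (X i) k ∪ {1}` form a compact set. Its images under the
continuous map `maskOne` are countably many compact sets covering the finitely supported elements.
Bounding the size of the support rather than the support itself is what makes the family countable.
-/

open Set

section

variable {I : Type*}

theorem isClosed_setOf_encard_true_le (n : ℕ) :
    IsClosed {m : I → Bool | {i | m i = true}.encard ≤ n} := by
  -- `n + 1` true entries of `m` stay true on a basic open neighbourhood of `m`.
  refine isOpen_compl_iff.mp <| isOpen_iff_forall_mem_open.mpr fun m hm => ?_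
  obtain ⟨t, hts, ht⟩ := exists_subset_encard_eq (Order.add_one_le_of_lt (not_le.mp hm))
  have htfin : t.Finite := finite_of_encard_eq_coe (k := n + 1) (by simpa using ht)
  refine ⟨t.pi fun _ => {true}, fun m' hm' hle => ?_,
    isOpen_set_pi htfin fun _ _ => isOpen_discrete _, fun i hi => hts hi⟩
  have : (n : ℕ∞) + 1 ≤ n := ht ▸ (encard_le_encard fun i hi => hm' i hi).trans hle
  exact (ENat.natCast_add_one_le_iff.mp this).false

theorem isCompact_setOf_encard_true_le (n : ℕ) :
    IsCompact {m : I → Bool | {i | m i = true}.encard ≤ n} :=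
  (isClosed_setOf_encard_true_le n).isCompact

variable {X : I → Type*} [∀ i, One (X i)]

def maskOne (m : I → Bool) (f : ∀ i, X i) : ∀ i, X i := fun i => cond (m i) (f i) 1

theorem continuous_maskOne [∀ i, TopologicalSpace (X i)] :
    Continuous fun p : (I → Bool) × (∀ i, X i) => maskOne p.1 p.2 := by
  refine continuous_pi fun i => ?_
  have : Continuous fun q : Bool × X i => cond q.1 q.2 1 :=
    continuous_prod_of_discrete_left.mpr fun b => by
      cases b
      exacts [continuous_const, continuous_id]
  exact this.comp (f := fun p : (I → Bool) × (∀ i, X i) => (p.1 i, p.2 i)) (by fun_prop)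

theorem setOf_maskOne_ne_one_subset (m : I → Bool) (f : ∀ i, X i) :
    {i | maskOne m f i ≠ 1} ⊆ {i | m i = true} := fun i hi => by
  by_contra h
  simp_all [maskOne]

theorem maskOne_decide_ne_one [∀ i, DecidableEq (X i)] (f : ∀ i, X i) :
    maskOne (fun i => decide (f i ≠ 1)) f = f := by
  ext i
  by_cases h : f i = 1 <;> simp [maskOne, h]

theorem isSigmaCompact_setOf_finite_ne_one [∀ i, TopologicalSpace (X i)]
    [∀ i, SigmaCompactSpace (X i)] :
    IsSigmaCompact {f : ∀ i, X i | {j | f j ≠ 1}.Finite} := by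
  classical
  set K : ℕ × ℕ → Set ((I → Bool) × ∀ i, X i) := fun nk =>
    {m | {i | m i = true}.encard ≤ nk.1} ×ˢ univ.pi fun i => insert 1 (compactCovering (X i) nk.2)
  have hK : ∀ nk, IsCompact (K nk) := fun nk => (isCompact_setOf_encard_true_le nk.1).prod
    (isCompact_univ_pi fun i => (isCompact_compactCovering (X i) nk.2).insert 1)
  convert isSigmaCompact_iUnion_of_isCompact _ fun nk => (hK nk).image continuous_maskOne
  ext f
  simp only [mem_iUnion, mem_image]
  constructor
  · intro hf
    choose k hk using fun i => exists_mem_compactCovering (f i)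
    refine ⟨(hf.toFinset.card, hf.toFinset.sup k), (_, f), ⟨?_, fun i _ => ?_⟩,
      maskOne_decide_ne_one f⟩
    · show {i | decide (f i ≠ 1) = true}.encard ≤ _
      simpa only [decide_eq_true_eq] using hf.encard_eq_coe_toFinset_card.le
    · by_cases hi : f i = 1
      · exact .inl hi
      · exact .inr (compactCovering_subset _ (Finset.le_sup (hf.mem_toFinset.mpr hi)) (hk i))
  · rintro ⟨nk, ⟨m, g⟩, ⟨hm, -⟩, rfl⟩
    exact (finite_of_encard_le_coe hm).subset (setOf_maskOne_ne_one_subset m g)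

end

theorem stmt_9_general {I : Type*} (X : I → Type*) [∀ i, Group (X i)]
    [∀ i, TopologicalSpace (X i)]
    [∀ i, SigmaCompactSpace (X i)] :
    IsSigmaCompact {f : ∀ i, X i | {j | f j ≠ 1}.Finite} :=
  isSigmaCompact_setOf_finite_ne_one

/-- Corson's theorem: the subgroup of finitely supported elements of a product of
σ-compact topological groups is σ-compact (in the product topology). -/
theorem stmt_9 {I : Type*} (X : I → Type*) [∀ i, Group (X i)]
    [∀ i, TopologicalSpace (X i)] [∀ i, IsTopologicalGroup (X i)]
    [∀ i, SigmaCompactSpace (X i)] :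
    IsSigmaCompact {f : ∀ i, X i | {j | f j ≠ 1}.Finite} :=
  stmt_9_general X
end

section
/- For every infinite cardinal κ there is a T₀ topological group of cardinality κ that is σ-compact and Rothberger bounded. Concretely, the group G of finitely supported elements of ℤ^κ (product topology, ℤ discrete) is σ-compact, has cardinality κ, and is Rothberger bounded. -/
open scoped Pointwise

/-!
A finitely supported `f : ι → M` lies in `{f | #(support f) ≤ n} ∩ ∏ compactCovering M n` for large
`n`; the first set is closed (a function with more than `n` nonzero coordinates keeps them nonzero
nearby), so these sets are compact by Tychonoff.

For Rothberger boundedness, with `M` countable and discrete, each `U n` contains every function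
vanishing on some finite `F n`. The finitely supported functions on the countable set `D = ⋃ F n`
are countably many, say `x 0, x 1, …`; a finitely supported `g` agrees on `D` with some `x n`,
so `g - x n` vanishes on `F n` and `g ∈ x n + U n`.
-/

open Set Function Filter Topology

/-- Neighbourhoods are taken in the ambient group; their traces on `S` are exactly the
neighbourhoods of `0` in `S`. -/
def IsRothbergerBounded {G : Type*} [AddGroup G] [TopologicalSpace G] (S : Set G) : Prop :=
  ∀ U : ℕ → Set G, (∀ n, U n ∈ 𝓝 0) → ∃ x : ℕ → G, (∀ n, x n ∈ S) ∧ S ⊆ ⋃ n, x n +ᵥ U n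

section

variable {ι M : Type*}

section Zero

variable [Zero M]

theorem isClosed_setOf_encard_support_le [TopologicalSpace M] [T1Space M] (n : ℕ) :
    IsClosed {f : ι → M | (support f).encard ≤ n} := by
  rw [← isOpen_compl_iff, isOpen_iff_forall_mem_open]
  intro f hf
  obtain ⟨t, hts, htn⟩ := exists_subset_encard_eq (Order.add_one_le_of_lt (not_le.1 hf))
  have ht : t.Finite := finite_of_encard_eq_coe htn
  refine ⟨⋂ i ∈ t, eval i ⁻¹' {0}ᶜ, fun g hg => ?_,
    ht.isOpen_biInter fun i _ => isOpen_compl_singleton.preimage (continuous_apply i),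
    mem_iInter₂.2 hts⟩
  have : (n : ℕ∞) + 1 ≤ (support g).encard :=
    htn ▸ encard_le_encard fun i hi => mem_iInter₂.1 hg i hi
  exact not_le.2 ((ENat.add_one_le_iff (ENat.natCast_ne_top n)).1 this)

theorem isSigmaCompact_setOf_support_finite [TopologicalSpace M] [T1Space M] [SigmaCompactSpace M] :
    IsSigmaCompact {f : ι → M | (support f).Finite} := by
  refine ⟨fun n => {f | (support f).encard ≤ n} ∩ univ.pi fun _ => compactCovering M n,
    fun n => (isCompact_univ_pi fun _ => isCompact_compactCovering M n).inter_left
      (isClosed_setOf_encard_support_le n), ?_⟩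
  ext f
  simp only [mem_iUnion, mem_inter_iff, mem_ofPred_eq]
  constructor
  · rintro ⟨n, hn, -⟩
    exact finite_of_encard_le_coe hn
  · intro hf
    have hcard : ∀ᶠ n : ℕ in atTop, (support f).encard ≤ n := by
      rw [hf.encard_eq_coe_toFinset_card]
      exact (eventually_ge_atTop _).mono fun n hn => by exact_mod_cast hn
    have hrange : ∀ᶠ n in atTop, ∀ y ∈ range f, y ∈ compactCovering M n :=
      (((hf.image f).insert 0).subset (range_subset_insert_image_support f)).eventually_all.2
        fun y _ => by
          obtain ⟨m, hm⟩ := exists_mem_compactCovering y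
          exact (eventually_ge_atTop m).mono fun n hn => compactCovering_subset M hn hm
    obtain ⟨n, hn, hfn⟩ := (hcard.and hrange).exists
    exact ⟨n, hn, fun i _ => hfn _ (mem_range_self i)⟩

theorem mk_subtype_support_finite :
    Cardinal.mk {f : ι → M // (support f).Finite} = Cardinal.mk (ι →₀ M) :=
  Cardinal.mk_congr
    { toFun := fun f => Finsupp.ofSupportFinite f.1 f.2
      invFun := fun g => ⟨g, g.hasFiniteSupport⟩
      left_inv := fun _ => Subtype.ext Finsupp.ofSupportFinite_coe
      right_inv := fun _ => DFunLike.coe_injective Finsupp.ofSupportFinite_coe }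

theorem exists_seq_support_finite_forall_exists_eqOn [Countable M] {D : Set ι}
    (hD : D.Countable) :
    ∃ x : ℕ → ι → M, (∀ n, (support (x n)).Finite) ∧
      ∀ g : ι → M, (support g).Finite → ∃ n, EqOn (x n) g D := by
  have : Countable D := hD.to_subtype
  obtain ⟨e, he⟩ := exists_surjective_nat (D →₀ M)
  refine ⟨fun n => Finsupp.embDomain (Embedding.subtype _) (e n),
    fun n => Finsupp.hasFiniteSupport _, fun g hg => ?_⟩
  obtain ⟨n, hn⟩ := he ((Finsupp.ofSupportFinite g hg).subtypeDomain (· ∈ D))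
  refine ⟨n, fun i hi => ?_⟩
  calc _ = e n ⟨i, hi⟩ := Finsupp.embDomain_apply_self _ _ (⟨i, hi⟩ : D)
    _ = g i := by rw [hn, Finsupp.subtypeDomain_apply, Finsupp.ofSupportFinite_coe]

end Zero

theorem exists_finite_eqOn_subset_of_mem_nhds [TopologicalSpace M] [DiscreteTopology M]
    {x : ι → M} {U : Set (ι → M)} (hU : U ∈ 𝓝 x) :
    ∃ F : Set ι, F.Finite ∧ {f | EqOn f x F} ⊆ U := by
  rw [nhds_pi, Filter.mem_pi] at hU
  obtain ⟨F, hF, t, ht, hFU⟩ := hU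
  refine ⟨F, hF, fun f hf => hFU fun i hi => ?_⟩
  rw [hf hi]
  exact mem_of_mem_nhds (ht i)

theorem isRothbergerBounded_setOf_support_finite [AddGroup M] [TopologicalSpace M]
    [DiscreteTopology M] [Countable M] :
    IsRothbergerBounded {f : ι → M | (support f).Finite} := by
  intro U hU
  choose F hF hFU using fun n => exists_finite_eqOn_subset_of_mem_nhds (hU n)
  obtain ⟨x, hx, hxg⟩ := exists_seq_support_finite_forall_exists_eqOn (M := M)
    (countable_iUnion fun n => (hF n).countable)
  refine ⟨x, hx, fun g hg => ?_⟩
  obtain ⟨n, hn⟩ := hxg g hg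
  refine mem_iUnion.2 ⟨n, mem_vadd_set_iff_neg_vadd_mem.2 (hFU n fun i hi => ?_)⟩
  simp [hn (mem_iUnion.2 ⟨n, hi⟩)]

end

/-- For every infinite cardinal (represented by an infinite index type `κ`), the group
`G` of finitely supported elements of `ℤ^κ` (product topology, `ℤ` discrete) is a
T₀ topological group that is σ-compact, has cardinality `#κ`, and is Rothberger
bounded. -/
theorem stmt_10 (κ : Type*) [Infinite κ] :
    IsSigmaCompact {f : κ → ℤ | (Function.support f).Finite} ∧
    T0Space {f : κ → ℤ // (Function.support f).Finite} ∧
    Cardinal.mk {f : κ → ℤ // (Function.support f).Finite} = Cardinal.mk κ ∧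
    (∀ U : ℕ → Set (κ → ℤ), (∀ n, U n ∈ nhds (0 : κ → ℤ)) →
      ∃ x : ℕ → (κ → ℤ), (∀ n, (Function.support (x n)).Finite) ∧
        {f : κ → ℤ | (Function.support f).Finite} ⊆ ⋃ n, x n +ᵥ U n) := by
  refine ⟨isSigmaCompact_setOf_support_finite, inferInstance, ?_,
    isRothbergerBounded_setOf_support_finite⟩
  rw [mk_subtype_support_finite, Cardinal.mk_finsupp_lift_of_infinite]
  simp [Cardinal.aleph0_le_mk κ]
end

section
/- Let G be the subgroup of finitely supported elements of a product ∏_{α<κ} G_α of discrete countable groups, endowed with the product topology (κ infinite). Then G is Rothberger bounded: for every sequence (U_n) of neighborhoods of the identity there exist x_n ∈ G with G = ⋃_n x_n * U_n. -/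
/-!
Each neighbourhood `U n` of the identity contains a cylinder `{h | h = 1 on F n}` with `F n`
finite, so only the countable set `J = ⋃ n, F n` of coordinates matters. The finitely supported
elements with support in `J` form a countable set; enumerating it as `x 0, x 1, …` makes every
finitely supported `g` agree on `J` with some `x n` (its truncation to `J`), whence
`g ∈ x n • U n`.
-/

open scoped Pointwise Topology

section
variable {ι : Type*} {X : ι → Type*}

lemma exists_finset_cylinder_subset_of_mem_nhds [∀ i, TopologicalSpace (X i)]
    {f : ∀ i, X i} {U : Set (∀ i, X i)} (hU : U ∈ 𝓝 f) :
    ∃ F : Finset ι, {g | ∀ i ∈ F, g i = f i} ⊆ U := by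
  rw [nhds_pi, Filter.mem_pi'] at hU
  obtain ⟨F, t, ht, hsub⟩ := hU
  exact ⟨F, fun g hg => hsub fun i hi => hg i hi ▸ mem_of_mem_nhds (ht i)⟩

lemma countable_setOf_eq_one_of_notMem [∀ i, One (X i)] [∀ i, Countable (X i)] {s : Set ι}
    (hs : s.Finite) : {f : ∀ i, X i | ∀ i ∉ s, f i = 1}.Countable := by
  have := hs.to_subtype
  refine (Set.mapsTo_univ (fun f (i : s) => f i) _).countable_of_injOn ?_ Set.countable_univ
  intro f hf g hg hfg
  funext i
  by_cases hi : i ∈ s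
  · exact congr_fun hfg ⟨i, hi⟩
  · rw [hf i hi, hg i hi]

lemma countable_setOf_finite_support_subset [∀ i, One (X i)] [∀ i, Countable (X i)]
    {J : Set ι} (hJ : J.Countable) :
    {f : ∀ i, X i | {i | f i ≠ 1}.Finite ∧ {i | f i ≠ 1} ⊆ J}.Countable := by
  refine ((Set.countable_ofPred_finite_subset hJ).biUnion
    fun s hs => countable_setOf_eq_one_of_notMem hs.1).mono ?_
  rintro f hf
  exact Set.mem_biUnion hf fun i hi => not_not.1 hi

lemma mem_smul_of_eq_on_finset [∀ i, Group (X i)] {U : Set (∀ i, X i)} {F : Finset ι}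
    (hF : {h | ∀ i ∈ F, h i = 1} ⊆ U) {x g : ∀ i, X i} (hxg : ∀ i ∈ F, x i = g i) :
    g ∈ x • U :=
  Set.mem_smul_set_iff_inv_smul_mem.2 <| hF fun i hi => by simp [hxg i hi]

end

theorem stmt_11_general {ι : Type*} (G : ι → Type*) [∀ i, Group (G i)]
    [∀ i, Countable (G i)] [∀ i, TopologicalSpace (G i)]
    (U : ℕ → Set (∀ i, G i)) (hU : ∀ n, U n ∈ nhds (1 : ∀ i, G i)) :
    ∃ x : ℕ → (∀ i, G i), (∀ n, {i | x n i ≠ 1}.Finite) ∧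
      {f : (∀ i, G i) | {i | f i ≠ 1}.Finite} ⊆ ⋃ n, x n • U n := by
  classical
  choose F hF using fun n => exists_finset_cylinder_subset_of_mem_nhds (hU n)
  set J : Set ι := ⋃ n, (F n : Set ι)
  have hJ : J.Countable := Set.countable_iUnion fun n => (F n).countable_toSet
  set D := {f : ∀ i, G i | {i | f i ≠ 1}.Finite ∧ {i | f i ≠ 1} ⊆ J}
  obtain ⟨x, hx⟩ : ∃ x : ℕ → ∀ i, G i, D = Set.range x :=
    (countable_setOf_finite_support_subset hJ).exists_eq_range ⟨1, by simp⟩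
  refine ⟨x, fun n => (hx ▸ Set.mem_range_self n : x n ∈ D).1, fun g hg => ?_⟩
  have htrunc : J.piecewise g 1 ∈ D := by
    have hsupp : {i | J.piecewise g 1 i ≠ 1} ⊆ {i | g i ≠ 1} ∩ J := fun i hi => by
      by_cases hiJ : i ∈ J <;> simp_all
    exact ⟨hg.subset fun i hi => (hsupp hi).1, fun i hi => (hsupp hi).2⟩
  obtain ⟨n, hn⟩ : J.piecewise g 1 ∈ Set.range x := hx ▸ htrunc
  refine Set.mem_iUnion_of_mem n (mem_smul_of_eq_on_finset (hF n) fun i hi => ?_)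
  rw [hn, J.piecewise_eq_of_mem _ _ (Set.mem_iUnion_of_mem n hi)]

/-- The subgroup of finitely supported elements of a product of discrete countable
groups (indexed by an infinite set, product topology) is Rothberger bounded: for every
sequence of neighborhoods of the identity there are finitely supported elements whose
translates cover all finitely supported elements. -/
theorem stmt_11 {ι : Type*} [Infinite ι] (G : ι → Type*) [∀ i, Group (G i)]
    [∀ i, Countable (G i)] [∀ i, TopologicalSpace (G i)] [∀ i, DiscreteTopology (G i)]
    (U : ℕ → Set (∀ i, G i)) (hU : ∀ n, U n ∈ nhds (1 : ∀ i, G i)) :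
    ∃ x : ℕ → (∀ i, G i), (∀ n, {i | x n i ≠ 1}.Finite) ∧
      {f : (∀ i, G i) | {i | f i ≠ 1}.Finite} ⊆ ⋃ n, x n • U n :=
  stmt_11_general G U hU
end

section
/- In the elementary 'countable-one' game on an infinite set S — where in inning n player ONE chooses a countable subset W_n of S with W_n ⊆ W_{n+1}, TWO responds with b_n ∈ W_n, and TWO wins if every x ∈ ⋃_n W_n satisfies b_n = x for infinitely many n — player TWO has a winning (perfect information) strategy. -/
/-!
TWO uses `Nat.unpair` to run through all pairs `(k, j)`: at inning `n = Nat.pair k j` she plays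
the `j`-th element of a fixed enumeration of `W k`, which lies in `W n` because `k ≤ n` and the
sets increase. A point `x ∈ W i₀` lies in every `W k` with `k ≥ i₀`, so for each such `k` some
inning with first coordinate `k` answers `x`; infinitely many `k` give infinitely many innings.
-/

section

open Set

variable {S : Type*} [Nonempty S]

open Classical in
noncomputable def enumOf (A : Set S) : ℕ → S :=
  if h : A.Countable ∧ A.Nonempty then (h.1.exists_eq_range h.2).choose
  else fun _ => Classical.arbitrary S

theorem range_enumOf {A : Set S} (hc : A.Countable) (hne : A.Nonempty) :
    range (enumOf A) = A := by
  rw [enumOf, dif_pos ⟨hc, hne⟩]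
  exact (hc.exists_eq_range hne).choose_spec.symm

noncomputable def diagonalStrategy (n : ℕ) (W : Fin (n + 1) → Set S) : S :=
  enumOf (W ⟨n.unpair.1, Nat.lt_succ_of_le n.unpair_left_le⟩) n.unpair.2

theorem diagonalStrategy_mem {W : ℕ → Set S} (hW : Monotone W) (hne : ∀ n, (W n).Nonempty)
    (hc : ∀ n, (W n).Countable) (n : ℕ) : diagonalStrategy n (fun i => W i) ∈ W n := by
  refine hW n.unpair_left_le ?_
  rw [← range_enumOf (hc _) (hne _)]
  exact mem_range_self _

theorem infinite_setOf_diagonalStrategy_eq {W : ℕ → Set S} (hW : Monotone W)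
    (hc : ∀ n, (W n).Countable) {x : S} {i₀ : ℕ} (hx : x ∈ W i₀) :
    {n | diagonalStrategy n (fun i => W i) = x}.Infinite := by
  refine Infinite.of_image (fun n => n.unpair.1) ((Ici_infinite i₀).mono fun k hk => ?_)
  have hxk : x ∈ range (enumOf (W k)) := by
    rw [range_enumOf (hc k) ⟨x, hW hk hx⟩]
    exact hW hk hx
  obtain ⟨j, hj⟩ := hxk
  exact ⟨Nat.pair k j, by simpa [diagonalStrategy] using hj, by simp⟩

end

/-- TWO has a winning strategy in the "countable-one" game on an infinite set `S`:
ONE plays an increasing sequence of countable subsets `W n` of `S`, TWO responds with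
`b n ∈ W n`, and TWO wins if every element of `⋃ n, W n` is chosen by TWO infinitely
often.  The strategy assigns to each finite sequence `(W 0, …, W n)` of ONE's moves an
element of `W n`; it is winning if every play following it is won by TWO. -/
theorem stmt_12 (S : Type*) [Infinite S] :
    ∃ σ : (n : ℕ) → (Fin (n + 1) → Set S) → S,
      ∀ W : ℕ → Set S, (∀ n, (W n).Nonempty) → (∀ n, (W n).Countable) → (∀ n, W n ⊆ W (n + 1)) →
        (∀ n, σ n (fun i => W i) ∈ W n) ∧
        ∀ x ∈ ⋃ n, W n, {n | σ n (fun i => W i) = x}.Infinite := by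
  refine ⟨diagonalStrategy, fun W hne hc hsucc => ?_⟩
  have hW : Monotone W := monotone_nat_of_le_succ hsucc
  refine ⟨diagonalStrategy_mem hW hne hc, fun x hx => ?_⟩
  obtain ⟨i₀, hx⟩ := Set.mem_iUnion.mp hx
  exact infinite_setOf_diagonalStrategy_eq hW hc hx
end

section
/- Let G be a topological group and suppose ONE has no winning strategy in the game G₁(O,O_X) played on G, where X ⊆ G. Then X is Rothberger bounded in G, i.e., S₁(O_nbd, O_X) holds: for every sequence (U_n) of neighborhoods of the identity there are x_n ∈ G with X ⊆ ⋃_n x_n*U_n. -/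
/-! ONE may play, in inning `n`, the cover of `G` by the translates `x • U n`. As this strategy
is not winning, some play against it covers `X`, and TWO's picks in that play are translates
`x n • U n`. -/

open scoped Pointwise

theorem sUnion_range_smul_eq_univ {M : Type*} [Monoid M] {U : Set M} (hU : (1 : M) ∈ U) :
    ⋃₀ Set.range (fun x : M => x • U) = Set.univ :=
  Set.eq_univ_of_forall fun x =>
    ⟨x • U, ⟨x, rfl⟩, by simpa using Set.smul_mem_smul_set (a := x) hU⟩

theorem isOpen_of_mem_range_smul {G α : Type*} [Group G] [MulAction G α] [TopologicalSpace α]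
    [ContinuousConstSMul G α] {U V : Set α} (hU : IsOpen U)
    (hV : V ∈ Set.range (fun x : G => x • U)) : IsOpen V := by
  obtain ⟨x, rfl⟩ := hV
  exact hU.smul x

/-- If ONE has no winning strategy in the game `G₁(O, O_X)` on a topological group `G`
(ONE plays open covers of `G`, TWO picks a member of each, TWO wins if the picks cover
`X`), then `X` is Rothberger bounded in `G`: for every sequence of open neighborhoods
of the identity there are translates whose union contains `X`. -/
theorem stmt_16 {G : Type*} [Group G] [TopologicalSpace G] [IsTopologicalGroup G]
    (X : Set G)
    (hONE : ¬ ∃ σ : List (Set G) → Set (Set G),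
      (∀ h : List (Set G), (∀ V ∈ σ h, IsOpen V) ∧ ⋃₀ σ h = Set.univ) ∧
      ∀ T : ℕ → Set G, (∀ n, T n ∈ σ (List.ofFn fun i : Fin n => T i)) →
        ¬ X ⊆ ⋃ n, T n) :
    ∀ U : ℕ → Set G, (∀ n, IsOpen (U n) ∧ (1 : G) ∈ U n) →
      ∃ x : ℕ → G, X ⊆ ⋃ n, x n • U n := by
  intro U hU
  push Not at hONE
  obtain ⟨T, hT, hXT⟩ := hONE (fun h => Set.range fun x : G => x • U h.length) fun h =>
    ⟨fun _ hV => isOpen_of_mem_range_smul (hU _).1 hV, sUnion_range_smul_eq_univ (hU _).2⟩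
  have hT_translate : ∀ n, ∃ x : G, x • U n = T n := by
    simpa only [List.length_ofFn, Set.mem_range] using hT
  choose x hx using hT_translate
  exact ⟨x, by simpa only [hx] using hXT⟩
end

section
/- Let G be a Lindelöf P-group in which TWO has a winning strategy in the game G₁(O_nbd, O) (played with covers by left translates of identity neighborhoods). Then TWO has a winning strategy in the game G₁(O,O) on G. -/
/-!
Given an open cover `𝒪` of a Lindelöf P-group `G`, every point `x` has an open identity
neighbourhood `W x` with `x (W x)²` inside a member of `𝒪`. By the Lindelöf property countably many translates `x W x` cover `G`,
and by the P-property the intersection `N` of the corresponding `W x` is open; then every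
translate `y N` lies in a member of `𝒪` (the Lebesgue covering lemma).

TWO answers ONE's cover `𝒪ₙ` in `G₁(O, O)` by feeding the Lebesgue neighbourhood `N(𝒪ₙ)` to
the winning strategy for `G₁(O_nbd, O)`, which returns a point `yₙ`, and then choosing a member
of `𝒪ₙ` containing `yₙ N(𝒪ₙ)`. These members contain the translates `yₙ N(𝒪ₙ)`, which cover `G`.
-/

open Set Topology
open scoped Pointwise

theorem isOpen_sInter_of_countable {X : Type*} [TopologicalSpace X]
    (hP : ∀ f : ℕ → Set X, (∀ n, IsOpen (f n)) → IsOpen (⋂ n, f n))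
    {S : Set (Set X)} (hS : S.Countable) (hopen : ∀ s ∈ S, IsOpen s) : IsOpen (⋂₀ S) := by
  rcases S.eq_empty_or_nonempty with rfl | hne
  · simp
  obtain ⟨f, rfl⟩ := hS.exists_eq_range hne
  rw [sInter_range]
  exact hP f fun n => hopen _ ⟨n, rfl⟩

section LindelofPGroup

variable {G : Type*} [Group G] [TopologicalSpace G] [ContinuousMul G]

theorem IsOpen.exists_open_one_mem_smul_mul_subset {V : Set G} (hV : IsOpen V) {x : G}
    (hx : x ∈ V) : ∃ W : Set G, IsOpen W ∧ (1 : G) ∈ W ∧ x • (W * W) ⊆ V := by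
  have h1 : x⁻¹ • V ∈ 𝓝 (1 : G) :=
    (hV.smul x⁻¹).mem_nhds (by simpa [mem_smul_set_iff_inv_smul_mem] using hx)
  obtain ⟨W, hW, hW1, hWW⟩ := exists_open_nhds_one_mul_subset h1
  exact ⟨W, hW, hW1, smul_set_subset_iff_subset_inv_smul_set.2 hWW⟩

variable [LindelofSpace G]

theorem exists_open_one_mem_forall_smul_subset
    (hP : ∀ f : ℕ → Set G, (∀ n, IsOpen (f n)) → IsOpen (⋂ n, f n))
    {𝒪 : Set (Set G)} (hopen : ∀ V ∈ 𝒪, IsOpen V) (hcov : ⋃₀ 𝒪 = univ) :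
    ∃ N : Set G, IsOpen N ∧ (1 : G) ∈ N ∧ ∀ y : G, ∃ V ∈ 𝒪, y • N ⊆ V := by
  have hlocal : ∀ x : G, ∃ V ∈ 𝒪, ∃ W : Set G, IsOpen W ∧ (1 : G) ∈ W ∧ x • (W * W) ⊆ V := by
    intro x
    obtain ⟨V, hV𝒪, hxV⟩ := mem_sUnion.1 (hcov ▸ mem_univ x)
    exact ⟨V, hV𝒪, (hopen V hV𝒪).exists_open_one_mem_smul_mul_subset hxV⟩
  choose V hV𝒪 W hW hW1 hWW using hlocal
  obtain ⟨t, htc, htcov⟩ := isLindelof_univ.elim_countable_subcover (fun x => x • W x)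
    (fun x => (hW x).smul x) fun x _ =>
      mem_iUnion.2 ⟨x, by simpa using smul_mem_smul_set (a := x) (hW1 x)⟩
  refine ⟨⋂₀ (W '' t), isOpen_sInter_of_countable hP (htc.image W) (by simpa using fun x _ => hW x),
    mem_sInter.2 (by simpa using fun x _ => hW1 x), fun y => ?_⟩
  obtain ⟨x, hxt, w, hw, rfl⟩ := mem_iUnion₂.1 (htcov (mem_univ y))
  refine ⟨V x, hV𝒪 x, ?_⟩
  calc (x • w) • ⋂₀ (W '' t) = x • (w • ⋂₀ (W '' t)) := (smul_smul x w _).symm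
    _ ⊆ x • (W x * W x) := smul_set_mono <| (smul_set_subset_smul hw).trans <|
      smul_subset_smul_left (sInter_subset_of_mem (mem_image_of_mem W hxt))
    _ ⊆ V x := hWW x

theorem exists_lebesgue_selection
    (hP : ∀ f : ℕ → Set G, (∀ n, IsOpen (f n)) → IsOpen (⋂ n, f n)) :
    ∃ (N : Set (Set G) → Set G) (pick : Set (Set G) → G → Set G),
      (∀ 𝒪, IsOpen (N 𝒪) ∧ (1 : G) ∈ N 𝒪) ∧
      ∀ 𝒪 : Set (Set G), (∀ V ∈ 𝒪, IsOpen V) → ⋃₀ 𝒪 = univ →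
        ∀ y, pick 𝒪 y ∈ 𝒪 ∧ y • N 𝒪 ⊆ pick 𝒪 y := by
  have : ∀ 𝒪 : Set (Set G), ∃ (N : Set G) (pick : G → Set G), (IsOpen N ∧ (1 : G) ∈ N) ∧
      ((∀ V ∈ 𝒪, IsOpen V) → ⋃₀ 𝒪 = univ → ∀ y, pick y ∈ 𝒪 ∧ y • N ⊆ pick y) := by
    intro 𝒪
    by_cases h𝒪 : (∀ V ∈ 𝒪, IsOpen V) ∧ ⋃₀ 𝒪 = univ
    · obtain ⟨N, hN, hN1, hsub⟩ := exists_open_one_mem_forall_smul_subset hP h𝒪.1 h𝒪.2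
      choose pick hpick using hsub
      exact ⟨N, pick, ⟨hN, hN1⟩, fun _ _ y => hpick y⟩
    · exact ⟨univ, fun _ => ∅, ⟨isOpen_univ, mem_univ 1⟩, fun h h' => absurd ⟨h, h'⟩ h𝒪⟩
  choose N pick hN hpick using this
  exact ⟨N, pick, hN, hpick⟩

end LindelofPGroup

/-- If `G` is a Lindelöf P-group and TWO has a winning strategy in the game
`G₁(O_nbd, O)` (ONE plays covers by left translates of open identity neighborhoods,
TWO picks a translate, and TWO wins if the picks cover `G`), then TWO has a winning
strategy in the game `G₁(O, O)` on `G` (ONE plays arbitrary open covers). -/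
theorem stmt_18 {G : Type*} [Group G] [TopologicalSpace G] [IsTopologicalGroup G]
    [LindelofSpace G]
    (hP : ∀ f : ℕ → Set G, (∀ n, IsOpen (f n)) → IsOpen (⋂ n, f n))
    (hTWO : ∃ σ : (n : ℕ) → (Fin (n + 1) → Set G) → G,
      ∀ U : ℕ → Set G, (∀ n, IsOpen (U n) ∧ (1 : G) ∈ U n) →
        (⋃ n, σ n (fun i => U i) • U n) = Set.univ) :
    ∃ τ : (n : ℕ) → (Fin (n + 1) → Set (Set G)) → Set G,
      ∀ O : ℕ → Set (Set G), (∀ n, (∀ V ∈ O n, IsOpen V) ∧ ⋃₀ O n = Set.univ) →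
        (∀ n, τ n (fun i => O i) ∈ O n) ∧ (⋃ n, τ n (fun i => O i)) = Set.univ := by
  obtain ⟨σ, hσ⟩ := hTWO
  obtain ⟨N, pick, hN, hpick⟩ := exists_lebesgue_selection hP
  refine ⟨fun n O => pick (O (Fin.last n)) (σ n fun i => N (O i)), fun O hO =>
    ⟨fun n => (hpick (O n) (hO n).1 (hO n).2 _).1, ?_⟩⟩
  refine eq_univ_of_univ_subset ?_
  rw [← hσ (fun n => N (O n)) fun n => hN (O n)]
  exact iUnion_mono fun n => (hpick (O n) (hO n).1 (hO n).2 _).2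
end
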